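/- arXiv:1809.04488 — 4 statements merged into one kernel-verified Lean document; each statement's English description precedes it below -/
import Mathlib

section
/- Let n ≥ 1 and let s₁, s₂ be natural numbers with s₁ ≤ n, s₂ ≤ n, s₁² ≥ n and s₂² ≥ n. If S₁ and S₂ are independent uniformly random subsets of {1,…,n} with |S₁| = s₁ and |S₂| = s₂, then the probability that S₁ ∩ S₂ ≠ ∅ is at least 1 − e⁻¹. Equivalently, the number of ordered pairs (A, B) of disjoint subsets of {1,…,n} with |A| = s₁ and |B| = s₂ is at most e⁻¹ · C(n, s₁) · C(n, s₂), where C(·,·) denotes the binomial coefficient and e = exp(1). -/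
/-!
Choosing `A` first, the admissible `B` are the `s₂`-subsets of the `n - s₁` points outside `A`,
so there are `C(n, s₁) · C(n - s₁, s₂)` disjoint pairs. Comparing the falling factorials of
`n - s₁` and `n` factor by factor, `(n - s₁ - i) · n ≤ (n - s₁) · (n - i)`, hence
`C(n - s₁, s₂) ≤ (1 - s₁/n)^s₂ · C(n, s₂) ≤ exp(-s₁ s₂ / n) · C(n, s₂)`, and `s₁ s₂ ≥ n`
follows from `s₁² ≥ n` and `s₂² ≥ n`.
-/

open Finset

section Counting

variable {α : Type*} [Fintype α] [DecidableEq α]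

theorem card_filter_card_eq_disjoint (A : Finset α) (t : ℕ) :
    #{B : Finset α | #B = t ∧ Disjoint A B} = (Fintype.card α - #A).choose t := by
  have : ({B : Finset α | #B = t ∧ Disjoint A B} : Finset _) = Aᶜ.powersetCard t := by
    ext B
    simp [mem_powersetCard, subset_compl_iff_disjoint_left, and_comm]
  rw [this, card_powersetCard, card_compl]

theorem card_disjoint_pairs (s t : ℕ) :
    #{AB : Finset α × Finset α | #AB.1 = s ∧ #AB.2 = t ∧ Disjoint AB.1 AB.2} =
      (Fintype.card α).choose s * (Fintype.card α - s).choose t := by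
  rw [card_filter, Fintype.sum_prod_type]
  calc ∑ A : Finset α, ∑ B : Finset α, (if #A = s ∧ #B = t ∧ Disjoint A B then 1 else 0)
      = ∑ A : Finset α, if #A = s then (Fintype.card α - s).choose t else 0 := by
        refine sum_congr rfl fun A _ => ?_
        split_ifs with hA
        · rw [← hA, ← card_filter_card_eq_disjoint, card_filter]
          simp [hA]
        · simp [hA]
    _ = (Fintype.card α).choose s * (Fintype.card α - s).choose t := by
        rw [sum_ite, sum_const_zero, add_zero, sum_const, smul_eq_mul, univ_filter_card_eq,
          card_powersetCard, card_univ]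

end Counting

theorem Nat.descFactorial_sub_mul_pow_le (n s t : ℕ) :
    (n - s).descFactorial t * n ^ t ≤ (n - s) ^ t * n.descFactorial t := by
  simp only [descFactorial_eq_prod_range, pow_eq_prod_const, ← prod_mul_distrib]
  refine prod_le_prod' fun i _ => ?_
  rcases le_or_gt (s + i) n with h | h
  · obtain ⟨a, rfl⟩ := Nat.exists_eq_add_of_le h
    rw [show s + i + a - s - i = a by omega, show s + i + a - s = i + a by omega,
      show s + i + a - i = s + a by omega]
    nlinarith
  · simp [show n - s - i = 0 by omega]

theorem Nat.choose_sub_mul_pow_le (n s t : ℕ) :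
    (n - s).choose t * n ^ t ≤ (n - s) ^ t * n.choose t := by
  have := descFactorial_sub_mul_pow_le n s t
  simp only [descFactorial_eq_factorial_mul_choose, mul_assoc, mul_left_comm _ t.factorial] at this
  exact Nat.le_of_mul_le_mul_left this t.factorial_pos

theorem Real.choose_sub_le_exp_mul_choose {n s : ℕ} (hn : 0 < n) (hs : s ≤ n) (t : ℕ) :
    ((n - s).choose t : ℝ) ≤ Real.exp (-(s * t / n)) * n.choose t := by
  have hn' : (0 : ℝ) < n := by exact_mod_cast hn
  have key : ((n - s).choose t : ℝ) * n ^ t ≤ (n - s : ℝ) ^ t * n.choose t := by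
    exact_mod_cast Nat.choose_sub_mul_pow_le n s t
  calc ((n - s).choose t : ℝ) ≤ (1 - s / n : ℝ) ^ t * n.choose t := by
        rw [one_sub_div hn'.ne', div_pow, div_mul_eq_mul_div, le_div_iff₀ (by positivity)]
        exact key
    _ ≤ Real.exp (-(s / n)) ^ t * n.choose t := by
        have : 0 ≤ 1 - (s / n : ℝ) := by
          rw [sub_nonneg, div_le_one hn']
          exact_mod_cast hs
        gcongr
        exact Real.one_sub_le_exp_neg _
    _ = Real.exp (-(s * t / n)) * n.choose t := by
        rw [← Real.exp_nat_mul]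
        ring_nf

theorem Nat.le_mul_of_le_sq {n a b : ℕ} (ha : n ≤ a ^ 2) (hb : n ≤ b ^ 2) : n ≤ a * b := by
  rw [← Nat.pow_le_pow_iff_left two_ne_zero, mul_pow, sq]
  exact Nat.mul_le_mul ha hb

theorem expected_disjoint_pairs_bound_general (n s₁ s₂ : ℕ) (hn : 1 ≤ n)
    (h₁ : s₁ ≤ n) (hs₁ : n ≤ s₁ ^ 2) (hs₂ : n ≤ s₂ ^ 2) :
    (((Finset.univ : Finset (Finset (Fin n) × Finset (Fin n))).filter
        (fun AB => AB.1.card = s₁ ∧ AB.2.card = s₂ ∧ Disjoint AB.1 AB.2)).card : ℝ)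
      ≤ Real.exp (-1) * (n.choose s₁) * (n.choose s₂) := by
  have hn' : (0 : ℝ) < n := by exact_mod_cast hn
  have hmul : (1 : ℝ) ≤ s₁ * s₂ / n := by
    rw [one_le_div hn']
    exact_mod_cast Nat.le_mul_of_le_sq hs₁ hs₂
  rw [card_disjoint_pairs, Fintype.card_fin, Nat.cast_mul]
  calc (n.choose s₁ : ℝ) * (n - s₁).choose s₂
      ≤ n.choose s₁ * (Real.exp (-(s₁ * s₂ / n)) * n.choose s₂) := by
        gcongr
        exact Real.choose_sub_le_exp_mul_choose hn h₁ s₂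
    _ ≤ n.choose s₁ * (Real.exp (-1) * n.choose s₂) := by gcongr
    _ = Real.exp (-1) * n.choose s₁ * n.choose s₂ := by ring

/-- If `S₁` and `S₂` are independent uniformly random subsets of `{1,…,n}` of sizes
`s₁, s₂ ≤ n` with `s₁² ≥ n` and `s₂² ≥ n`, then `P[S₁ ∩ S₂ ≠ ∅] ≥ 1 − e⁻¹`.
Equivalently, the number of ordered pairs `(A, B)` of disjoint subsets of `{1,…,n}`
with `|A| = s₁` and `|B| = s₂` is at most `e⁻¹ · C(n,s₁) · C(n,s₂)`. -/
theorem expected_disjoint_pairs_bound (n s₁ s₂ : ℕ) (hn : 1 ≤ n)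
    (h₁ : s₁ ≤ n) (h₂ : s₂ ≤ n) (hs₁ : n ≤ s₁ ^ 2) (hs₂ : n ≤ s₂ ^ 2) :
    (((Finset.univ : Finset (Finset (Fin n) × Finset (Fin n))).filter
        (fun AB => AB.1.card = s₁ ∧ AB.2.card = s₂ ∧ Disjoint AB.1 AB.2)).card : ℝ)
      ≤ Real.exp (-1) * (n.choose s₁) * (n.choose s₂) :=
  expected_disjoint_pairs_bound_general n s₁ s₂ hn h₁ hs₁ hs₂
end

section
/- Let p be an exchangeable probability distribution on RB(n), let T₁ and T₂ be independent random trees each distributed according to p, and let 1 ≤ s ≤ n. Then P[MAST(T₁,T₂) ≥ s] ≤ C(n,s) · ∑_{t ∈ RB(s)} p_s(t)², where C(n,s) is the binomial coefficient and p_s is the marginal distribution of p on RB(s). -/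
/-- Rooted binary leaf-labeled trees with labels of type `α`. -/
inductive RTree (α : Type) : Type where
  | leaf : α → RTree α
  | node : RTree α → RTree α → RTree α
  deriving DecidableEq

namespace RTree

variable {α β : Type}

/-- The multiset of leaf labels of a tree. -/
def leafM : RTree α → Multiset α
  | leaf a => {a}
  | node l r => leafM l + leafM r

/-- `T` is a rooted binary leaf-labeled tree on label set `Fin n`:
every label of `Fin n` occurs exactly once among the leaves. -/
def IsRB {n : ℕ} (T : RTree (Fin n)) : Prop :=
  leafM T = (Finset.univ : Finset (Fin n)).val

/-- Relabel the leaves of a tree along a function. -/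
def relabel (f : α → β) : RTree α → RTree β
  | leaf a => leaf (f a)
  | node l r => node (relabel f l) (relabel f r)

/-- Restriction of a tree to the set `A` of labels (`none` means the empty tree). -/
def restrict [DecidableEq α] (A : Finset α) : RTree α → Option (RTree α)
  | leaf a => if a ∈ A then some (leaf a) else none
  | node l r =>
    match restrict A l, restrict A r with
    | some l', some r' => some (node l' r')
    | some l', none => some l'
    | none, some r' => some r'
    | none, none => none

/-- The size of a maximum agreement subtree of `T₁` and `T₂`: the largest cardinality
of a set `A` of labels with `T₁|_A = T₂|_A` (the empty set always agrees). -/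
def mast {n : ℕ} (T₁ T₂ : RTree (Fin n)) : ℕ :=
  ((Finset.univ : Finset (Fin n)).powerset.filter
    (fun A => restrict A T₁ = restrict A T₂)).sup Finset.card

end RTree

/-- The marginal distribution on trees with `s` leaves induced by a distribution `p` on
trees with `n` leaves (supported on the finite set `RBn`):
`pₛ(t) = ∑_{T ∈ RBn, T|_{{0,…,s−1}} = ι(t)} p(T)`, where `ι` identifies trees on `Fin s`
with trees on the label subset `{0,…,s−1}` of `Fin n`. -/
noncomputable def marginal {n : ℕ} (RBn : Finset (RTree (Fin n))) (p : RTree (Fin n) → ℝ)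
    (s : ℕ) (h : s ≤ n) (t : RTree (Fin s)) : ℝ :=
  ∑ T ∈ RBn.filter (fun T =>
      RTree.restrict ((Finset.univ : Finset (Fin s)).image (Fin.castLE h)) T =
        some (RTree.relabel (Fin.castLE h) t)), p T


/-! If `MAST(T₁, T₂) ≥ s`, some `s`-set `A` of labels has `T₁|_A = T₂|_A`, because restrictions
of an agreement set still agree; a union bound over the `C(n, s)` sets `A` therefore gives
`P[MAST ≥ s] ≤ ∑_A P[T₁|_A = T₂|_A]`. For fixed `A`, `T|_A` is the image of a unique tree of
`RB(s)` under the order embedding `Fin s → A`, so by independence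
`P[T₁|_A = T₂|_A] = ∑_t P[T|_A = t]²`. A permutation of the labels carrying `{0, …, s-1}` onto
`A` shows, by exchangeability, that `P[T|_A = t] = pₛ(t)` for every `A`. -/

namespace RTree

variable {α β γ : Type}

@[simp]
theorem relabel_id (T : RTree α) : relabel id T = T := by
  induction T <;> simp_all [relabel]

theorem relabel_relabel (f : β → γ) (g : α → β) (T : RTree α) :
    relabel f (relabel g T) = relabel (f ∘ g) T := by
  induction T <;> simp_all [relabel]

theorem relabel_congr {f g : α → β} {T : RTree α} (h : ∀ a ∈ leafM T, f a = g a) :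
    relabel f T = relabel g T := by
  induction T <;> simp_all [relabel, leafM]

theorem relabel_injective {f : α → β} (hf : Function.Injective f) :
    Function.Injective (relabel f) := by
  intro T₁ T₂ h
  induction T₁ generalizing T₂ with
  | leaf a => cases T₂ <;> simp_all [relabel, hf.eq_iff]
  | node l r ihl ihr =>
    cases T₂ with
    | leaf b => simp [relabel] at h
    | node l' r' =>
      simp only [relabel, node.injEq] at h ⊢
      exact ⟨ihl h.1, ihr h.2⟩

theorem leafM_relabel (f : α → β) (T : RTree α) :
    leafM (relabel f T) = (leafM T).map f := by
  induction T <;> simp_all [relabel, leafM]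

def relabelEquiv (σ : α ≃ β) : RTree α ≃ RTree β where
  toFun := relabel σ
  invFun := relabel σ.symm
  left_inv T := by simp [relabel_relabel]
  right_inv T := by simp [relabel_relabel]

theorem isRB_relabel_iff {n : ℕ} (σ : Equiv.Perm (Fin n)) {T : RTree (Fin n)} :
    IsRB (relabel σ T) ↔ IsRB T := by
  have hσ : (Finset.univ : Finset (Fin n)).val.map σ = Finset.univ.val := by simp
  rw [IsRB, IsRB, leafM_relabel, ← hσ, (Multiset.map_injective σ.injective).eq_iff, hσ]

section restrict

variable [DecidableEq α] [DecidableEq β]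

theorem restrict_node (A : Finset α) (l r : RTree α) :
    restrict A (node l r) = Option.merge node (restrict A l) (restrict A r) := by
  rw [restrict]
  cases restrict A l <;> cases restrict A r <;> rfl

theorem leafM_restrict (A : Finset α) (T : RTree α) :
    (restrict A T).elim 0 leafM = (leafM T).filter (· ∈ A) := by
  induction T with
  | leaf a => by_cases h : a ∈ A <;> simp [restrict, leafM, h, Multiset.filter_singleton]
  | node l r ihl ihr =>
    rw [leafM, Multiset.filter_add, ← ihl, ← ihr, restrict_node]
    cases restrict A l <;> cases restrict A r <;> simp [leafM]

theorem restrict_bind_restrict {A B : Finset α} (hBA : B ⊆ A) (T : RTree α) :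
    (restrict A T).bind (restrict B) = restrict B T := by
  induction T with
  | leaf a => by_cases ha : a ∈ A <;> simp [restrict, ha, mt (@hBA a)]
  | node l r ihl ihr =>
    rw [restrict_node, restrict_node, ← ihl, ← ihr]
    cases restrict A l <;> cases restrict A r <;> simp [restrict_node]

theorem restrict_image_relabel {f : α → β} (hf : Function.Injective f)
    (A : Finset α) (T : RTree α) :
    restrict (A.image f) (relabel f T) = (restrict A T).map (relabel f) := by
  induction T with
  | leaf a => by_cases h : a ∈ A <;> simp [restrict, relabel, hf.eq_iff, h]
  | node l r ihl ihr =>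
    rw [relabel, restrict_node, restrict_node, ihl, ihr]
    cases restrict A l <;> cases restrict A r <;> rfl

end restrict

theorem exists_isRB_restrict_image_eq {n s : ℕ} (hs : 1 ≤ s) {e : Fin s → Fin n}
    (he : Function.Injective e) {T : RTree (Fin n)} (hT : IsRB T) :
    ∃ t : RTree (Fin s), IsRB t ∧
      restrict (Finset.univ.image e) T = some (relabel e t) := by
  have : Nonempty (Fin s) := ⟨⟨0, hs⟩⟩
  have hleaves := leafM_restrict (Finset.univ.image e) T
  rw [hT, ← Finset.filter_val, Finset.filter_univ_mem,
    Finset.image_val_of_injOn he.injOn] at hleaves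
  cases hres : restrict (Finset.univ.image e) T with
  | none =>
    rw [hres, Option.elim_none, eq_comm, Multiset.map_eq_zero, Finset.val_eq_zero] at hleaves
    exact absurd hleaves Finset.univ_nonempty.ne_empty
  | some u =>
    rw [hres, Option.elim_some] at hleaves
    refine ⟨relabel (Function.invFun e) u, ?_, ?_⟩
    · rw [IsRB, leafM_relabel, hleaves, Multiset.map_map, Function.invFun_comp he,
        Multiset.map_id]
    · rw [relabel_relabel, relabel_congr (g := id), relabel_id]
      intro a ha
      rw [hleaves, Multiset.mem_map] at ha
      obtain ⟨i, -, rfl⟩ := ha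
      exact congrArg e (Function.leftInverse_invFun he i)

end RTree

section

variable {ι κ R : Type*} [CommSemiring R] [DecidableEq κ]

theorem Finset.sum_sum_ite_eq_sum_sq {s : Finset ι} {t : Finset κ} {g : ι → κ}
    (h : ∀ i ∈ s, g i ∈ t) (f : ι → R) :
    ∑ i ∈ s, ∑ j ∈ s, (if g i = g j then f i * f j else 0) =
      ∑ y ∈ t, (∑ i ∈ s with g i = y, f i) ^ 2 := by
  have hfibre : ∀ i ∈ s, ∑ j ∈ s, (if g i = g j then f i * f j else 0) =
      f i * ∑ j ∈ s with g j = g i, f j := by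
    intro i _
    rw [Finset.sum_filter, Finset.mul_sum]
    refine Finset.sum_congr rfl fun j _ => ?_
    rw [mul_ite, mul_zero]
    exact if_congr eq_comm rfl rfl
  calc ∑ i ∈ s, ∑ j ∈ s, (if g i = g j then f i * f j else 0)
      = ∑ y ∈ t, ∑ i ∈ s with g i = y, f i * ∑ j ∈ s with g j = y, f j := by
        rw [Finset.sum_congr rfl hfibre, ← Finset.sum_fiberwise_of_maps_to h]
        refine Finset.sum_congr rfl fun y _ => Finset.sum_congr rfl fun i hi => ?_
        rw [(Finset.mem_filter.1 hi).2]
    _ = ∑ y ∈ t, (∑ i ∈ s with g i = y, f i) ^ 2 := by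
        simp only [sq, Finset.sum_mul]

end

namespace RTree

theorem sum_restrict_image_eq_marginal {n s : ℕ} (hsn : s ≤ n)
    (RBn : Finset (RTree (Fin n))) (hRBn : ∀ T, T ∈ RBn ↔ IsRB T) (p : RTree (Fin n) → ℝ)
    (hexch : ∀ (σ : Equiv.Perm (Fin n)) (T : RTree (Fin n)), IsRB T → p (relabel σ T) = p T)
    {e : Fin s → Fin n} (he : Function.Injective e) (t : RTree (Fin s)) :
    ∑ T ∈ RBn with restrict (Finset.univ.image e) T = some (relabel e t), p T =
      marginal RBn p s hsn t := by
  obtain ⟨σ, hσ⟩ := Equiv.Perm.exists_extending_pair _ _ (Fin.castLE_injective hsn) he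
  obtain rfl : ⇑σ ∘ Fin.castLE hsn = e := funext hσ
  refine (Finset.sum_equiv (relabelEquiv σ) (fun T => ?_) fun T hT => ?_).symm
  · simp only [Finset.mem_filter, hRBn, relabelEquiv, Equiv.coe_fn_mk, isRB_relabel_iff,
      ← Finset.image_image, restrict_image_relabel σ.injective, ← relabel_relabel]
    exact and_congr_right' ((Option.map_injective (relabel_injective σ.injective)).eq_iff
      (b := some _)).symm
  · exact (hexch σ T ((hRBn T).1 (Finset.mem_filter.1 hT).1)).symm

theorem sum_sum_ite_restrict_eq_eq_sum_marginal_sq {n s : ℕ} (hs : 1 ≤ s) (hsn : s ≤ n)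
    {A : Finset (Fin n)} (hA : A.card = s)
    (RBn : Finset (RTree (Fin n))) (hRBn : ∀ T, T ∈ RBn ↔ IsRB T)
    (RBs : Finset (RTree (Fin s))) (hRBs : ∀ t, t ∈ RBs ↔ IsRB t) (p : RTree (Fin n) → ℝ)
    (hexch : ∀ (σ : Equiv.Perm (Fin n)) (T : RTree (Fin n)), IsRB T → p (relabel σ T) = p T) :
    ∑ T₁ ∈ RBn, ∑ T₂ ∈ RBn, (if restrict A T₁ = restrict A T₂ then p T₁ * p T₂ else 0) =
      ∑ t ∈ RBs, marginal RBn p s hsn t ^ 2 := by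
  set e := A.orderEmbOfFin hA
  have hA : Finset.univ.image e = A := A.image_orderEmbOfFin_univ hA
  have hmaps : ∀ T ∈ RBn, restrict A T ∈ RBs.image (fun t => some (relabel e t)) := by
    intro T hT
    obtain ⟨t, ht, hres⟩ := exists_isRB_restrict_image_eq hs e.injective ((hRBn T).1 hT)
    exact Finset.mem_image.2 ⟨t, (hRBs t).2 ht, hA ▸ hres.symm⟩
  rw [Finset.sum_sum_ite_eq_sum_sq hmaps, Finset.sum_image fun _ _ _ _ h =>
    relabel_injective e.injective (Option.some_injective _ h)]
  refine Finset.sum_congr rfl fun t _ => ?_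
  rw [← hA, sum_restrict_image_eq_marginal hsn RBn hRBn p hexch e.injective]

theorem exists_card_eq_restrict_eq_of_le_mast {n s : ℕ} (hs : 1 ≤ s) {T₁ T₂ : RTree (Fin n)}
    (h : s ≤ mast T₁ T₂) :
    ∃ A : Finset (Fin n), A.card = s ∧ restrict A T₁ = restrict A T₂ := by
  obtain ⟨B, hB, hsB⟩ := (Finset.le_sup_iff (show ⊥ < s from hs)).1 h
  obtain ⟨A, hAB, hA⟩ := Finset.exists_subset_card_eq hsB
  refine ⟨A, hA, ?_⟩
  rw [← restrict_bind_restrict hAB, (Finset.mem_filter.1 hB).2, restrict_bind_restrict hAB]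

theorem ite_le_mast_le_sum_ite_restrict_eq {M : Type*} [AddCommMonoid M] [PartialOrder M]
    [IsOrderedAddMonoid M] {n s : ℕ} (hs : 1 ≤ s) (T₁ T₂ : RTree (Fin n)) {x : M}
    (hx : 0 ≤ x) :
    (if s ≤ mast T₁ T₂ then x else 0) ≤
      ∑ A ∈ Finset.univ.powersetCard s, if restrict A T₁ = restrict A T₂ then x else 0 := by
  have hnonneg : ∀ A ∈ Finset.univ.powersetCard s,
      0 ≤ if restrict A T₁ = restrict A T₂ then x else 0 := fun A _ => by split <;> simp [hx]
  split_ifs with h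
  · obtain ⟨A, hA, hagree⟩ := exists_card_eq_restrict_eq_of_le_mast hs h
    calc x = if restrict A T₁ = restrict A T₂ then x else 0 := (if_pos hagree).symm
      _ ≤ _ := Finset.single_le_sum hnonneg (Finset.mem_powersetCard_univ.2 hA)
  · exact Finset.sum_nonneg hnonneg

end RTree

theorem prob_mast_ge_le_first_moment_general {n s : ℕ} (hs : 1 ≤ s) (hsn : s ≤ n)
    (RBn : Finset (RTree (Fin n))) (hRBn : ∀ T, T ∈ RBn ↔ RTree.IsRB T)
    (RBs : Finset (RTree (Fin s))) (hRBs : ∀ t, t ∈ RBs ↔ RTree.IsRB t)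
    (p : RTree (Fin n) → ℝ)
    (hp0 : ∀ T, 0 ≤ p T)
    (hexch : ∀ (σ : Equiv.Perm (Fin n)) (T : RTree (Fin n)), RTree.IsRB T →
      p (RTree.relabel (⇑σ) T) = p T) :
    ∑ T₁ ∈ RBn, ∑ T₂ ∈ RBn, (if s ≤ RTree.mast T₁ T₂ then p T₁ * p T₂ else 0)
      ≤ (n.choose s : ℝ) * ∑ t ∈ RBs, (marginal RBn p s hsn t) ^ 2 := by
  calc ∑ T₁ ∈ RBn, ∑ T₂ ∈ RBn, (if s ≤ RTree.mast T₁ T₂ then p T₁ * p T₂ else 0)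
      ≤ ∑ T₁ ∈ RBn, ∑ T₂ ∈ RBn, ∑ A ∈ Finset.univ.powersetCard s,
          (if RTree.restrict A T₁ = RTree.restrict A T₂ then p T₁ * p T₂ else 0) := by
        gcongr with T₁ _ T₂ _
        exact RTree.ite_le_mast_le_sum_ite_restrict_eq hs T₁ T₂ (mul_nonneg (hp0 T₁) (hp0 T₂))
    _ = ∑ A ∈ Finset.univ.powersetCard s, ∑ T₁ ∈ RBn, ∑ T₂ ∈ RBn,
          (if RTree.restrict A T₁ = RTree.restrict A T₂ then p T₁ * p T₂ else 0) := by
        simp only [Finset.sum_comm (s := RBn) (t := Finset.univ.powersetCard s)]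
    _ = (n.choose s : ℝ) * ∑ t ∈ RBs, (marginal RBn p s hsn t) ^ 2 := by
        rw [Finset.sum_congr rfl fun A hA =>
            RTree.sum_sum_ite_restrict_eq_eq_sum_marginal_sq hs hsn
              (Finset.mem_powersetCard_univ.1 hA) RBn hRBn RBs hRBs p hexch,
          Finset.sum_const, Finset.card_powersetCard, Finset.card_univ, Fintype.card_fin,
          nsmul_eq_mul]

/-- For `T₁, T₂` independent trees from an exchangeable probability distribution `p` on
`RB(n)` and `1 ≤ s ≤ n`: `P[MAST(T₁,T₂) ≥ s] ≤ C(n,s) · ∑_{t ∈ RB(s)} pₛ(t)²`. -/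
theorem prob_mast_ge_le_first_moment {n s : ℕ} (hs : 1 ≤ s) (hsn : s ≤ n)
    (RBn : Finset (RTree (Fin n))) (hRBn : ∀ T, T ∈ RBn ↔ RTree.IsRB T)
    (RBs : Finset (RTree (Fin s))) (hRBs : ∀ t, t ∈ RBs ↔ RTree.IsRB t)
    (p : RTree (Fin n) → ℝ)
    (hp0 : ∀ T, 0 ≤ p T) (hp1 : ∑ T ∈ RBn, p T = 1)
    (hexch : ∀ (σ : Equiv.Perm (Fin n)) (T : RTree (Fin n)), RTree.IsRB T →
      p (RTree.relabel (⇑σ) T) = p T) :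
    ∑ T₁ ∈ RBn, ∑ T₂ ∈ RBn, (if s ≤ RTree.mast T₁ T₂ then p T₁ * p T₂ else 0)
      ≤ (n.choose s : ℝ) * ∑ t ∈ RBs, (marginal RBn p s hsn t) ^ 2 :=
  prob_mast_ge_le_first_moment_general hs hsn RBn hRBn RBs hRBs p hp0 hexch
end

section
/- Let s ≥ 1 and let p be any exchangeable probability distribution on RB(s), the set of rooted binary leaf-labeled trees with leaf label set Fin s. Then ∑_{t ∈ RB(s)} p(t)² ≤ 2^{s−1} / s!. -/
lemma leafM_relabel {α β : Type} (f : α → β) (t : RTree α) :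
    (RTree.relabel f t).leafM = t.leafM.map f := by
  induction t with
  | leaf a => simp [RTree.relabel, RTree.leafM]
  | node l r hl hr => simp [RTree.relabel, RTree.leafM, hl, hr]

lemma relabel_eq_on {α β : Type} {f g : α → β} {t : RTree α}
    (h : RTree.relabel f t = RTree.relabel g t) :
    ∀ a ∈ t.leafM, f a = g a := by
  induction t with
  | leaf a =>
    simp only [RTree.relabel, RTree.leaf.injEq] at h
    intro b hb
    simp only [RTree.leafM, Multiset.mem_singleton] at hb
    subst hb; exact h
  | node l r hl hr =>
    simp only [RTree.relabel, RTree.node.injEq] at h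
    intro a ha
    simp only [RTree.leafM, Multiset.mem_add] at ha
    rcases ha with ha | ha
    · exact hl h.1 a ha
    · exact hr h.2 a ha

lemma isRB_relabel {s : ℕ} (σ : Equiv.Perm (Fin s)) {t : RTree (Fin s)}
    (ht : RTree.IsRB t) : RTree.IsRB (RTree.relabel (⇑σ) t) := by
  unfold RTree.IsRB at *
  rw [leafM_relabel, ht]
  have : (Finset.univ : Finset (Fin s)).val.map ⇑σ =
      ((Finset.univ : Finset (Fin s)).map σ.toEmbedding).val := rfl
  rw [this, Finset.map_univ_equiv]

/-- For any exchangeable probability distribution `p` on `RB(s)` with `s ≥ 1`,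
`∑_{t ∈ RB(s)} p(t)² ≤ 2^{s−1}/s!`. -/
theorem sum_sq_exchangeable_le {s : ℕ} (hs : 1 ≤ s)
    (RBs : Finset (RTree (Fin s))) (hRBs : ∀ t, t ∈ RBs ↔ RTree.IsRB t)
    (p : RTree (Fin s) → ℝ)
    (hp0 : ∀ t, 0 ≤ p t) (hp1 : ∑ t ∈ RBs, p t = 1)
    (hexch : ∀ (σ : Equiv.Perm (Fin s)) (t : RTree (Fin s)), RTree.IsRB t →
      p (RTree.relabel (⇑σ) t) = p t) :
    ∑ t ∈ RBs, p t ^ 2 ≤ (2 : ℝ) ^ (s - 1) / (s.factorial : ℝ) := by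

  have key : ∀ t ∈ RBs, p t ≤ 1 / (s.factorial : ℝ) := by
    intro t ht
    have htRB : RTree.IsRB t := (hRBs t).1 ht
    have hinj : Set.InjOn (fun σ : Equiv.Perm (Fin s) => RTree.relabel (⇑σ) t)
        (Finset.univ : Finset (Equiv.Perm (Fin s))) := by
      intro σ _ τ _ h
      have := relabel_eq_on h
      refine Equiv.ext fun a => this a ?_
      rw [htRB]; exact Finset.mem_univ a
    have himg : (Finset.univ.image (fun σ : Equiv.Perm (Fin s) => RTree.relabel (⇑σ) t))
        ⊆ RBs := by
      intro x hx
      rw [Finset.mem_image] at hx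
      obtain ⟨σ, _, rfl⟩ := hx
      exact (hRBs _).2 (isRB_relabel σ htRB)
    have h1 : ∑ σ : Equiv.Perm (Fin s), p (RTree.relabel (⇑σ) t)
        = (s.factorial : ℝ) * p t := by
      rw [Finset.sum_congr rfl (fun σ _ => hexch σ t htRB)]
      simp [Finset.card_univ, Fintype.card_perm, mul_comm]
    have h2 : ∑ σ : Equiv.Perm (Fin s), p (RTree.relabel (⇑σ) t)
        = ∑ x ∈ Finset.univ.image (fun σ : Equiv.Perm (Fin s) => RTree.relabel (⇑σ) t),
            p x := (Finset.sum_image (fun a ha b hb h => hinj ha hb h)).symm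
    have h3 : (s.factorial : ℝ) * p t ≤ 1 := by
      rw [← hp1, ← h1, h2]
      exact Finset.sum_le_sum_of_subset_of_nonneg himg (fun x _ _ => hp0 x)
    have hfac : (0 : ℝ) < (s.factorial : ℝ) := by
      exact_mod_cast Nat.factorial_pos s
    rw [le_div_iff₀ hfac, mul_comm]
    exact h3
  have step : ∑ t ∈ RBs, p t ^ 2 ≤ 1 / (s.factorial : ℝ) := by
    calc ∑ t ∈ RBs, p t ^ 2 ≤ ∑ t ∈ RBs, (1 / (s.factorial : ℝ)) * p t := by
          refine Finset.sum_le_sum fun t ht => ?_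
          rw [sq]
          exact mul_le_mul_of_nonneg_right (key t ht) (hp0 t)
      _ = 1 / (s.factorial : ℝ) := by rw [← Finset.mul_sum, hp1, mul_one]
  refine step.trans ?_
  gcongr
  exact_mod_cast Nat.one_le_two_pow
end

section
/- Let λ > e·√2 be a real number and for each n let s_n = ⌈λ·√n⌉. Then n · C(n, s_n) · 2^{s_n − 1} / (s_n)! tends to 0 as n → ∞ (where the terms are interpreted as 0 whenever s_n > n). -/
/-!
With `s ≥ λ√n`, the bounds `C(n,s) ≤ nˢ/s!` and `s! ≥ (s/e)ˢ` give
`C(n,s)·2^{s-1}/s! ≤ (2e²n/s²)ˢ ≤ rˢ ≤ r^{λ√n}` with `r = 2e²/λ² < 1`, so the `n`-th term is at most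
`n·exp(-c√n)` with `c = -λ log r > 0`, which tends to `0`.
-/

open Filter Topology Real
open scoped Nat

theorem choose_mul_two_pow_sub_one_div_factorial_le (n s : ℕ) :
    (n.choose s : ℝ) * 2 ^ (s - 1) / s ! ≤ (2 * exp 1 ^ 2 * n / s ^ 2) ^ s := by
  have hfac : (s ! : ℝ)⁻¹ ≤ exp 1 ^ s / s ^ s := by
    have hpos : (0 : ℝ) < (s : ℝ) ^ s := by exact_mod_cast Nat.pow_self_pos
    rw [le_div_iff₀ hpos, exp_one_pow, inv_mul_eq_div]
    exact pow_div_factorial_le_exp (x := s) s.cast_nonneg s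
  calc (n.choose s : ℝ) * 2 ^ (s - 1) / s !
      ≤ (n ^ s / s !) * 2 ^ s / s ! := by
        gcongr
        · exact Nat.choose_le_pow_div s n
        · exact one_le_two
        · exact s.sub_le 1
    _ = 2 ^ s * n ^ s * ((s ! : ℝ)⁻¹) ^ 2 := by ring
    _ ≤ 2 ^ s * n ^ s * (exp 1 ^ s / s ^ s) ^ 2 := by gcongr
    _ = (2 * exp 1 ^ 2 * n / s ^ 2) ^ s := by ring

theorem tendsto_mul_exp_mul_sqrt_atTop_nhds_zero {b : ℝ} (hb : b < 0) :
    Tendsto (fun x : ℝ => x * exp (b * √x)) atTop (𝓝 0) := by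
  have h := ((tendsto_pow_mul_exp_neg_atTop_nhds_zero 2).comp
    (tendsto_sqrt_atTop.const_mul_atTop (neg_pos.2 hb))).const_mul (b ^ 2)⁻¹
  rw [mul_zero] at h
  refine h.congr' ((eventually_ge_atTop 0).mono fun x hx => ?_)
  simp only [Function.comp_apply, mul_pow, neg_sq, sq_sqrt hx, neg_mul, neg_neg]
  field_simp [hb.ne]

theorem choose_mul_two_pow_sub_one_div_factorial_le_exp {lam : ℝ} (hlam0 : 0 ≤ lam)
    (hlam : 2 * exp 1 ^ 2 ≤ lam ^ 2) {n s : ℕ} (hs : lam * √n ≤ s) :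
    (n.choose s : ℝ) * 2 ^ (s - 1) / s ! ≤ exp (lam * log (2 * exp 1 ^ 2 / lam ^ 2) * √n) := by
  have hlam_sq : 0 < lam ^ 2 := (by positivity : (0 : ℝ) < 2 * exp 1 ^ 2).trans_le hlam
  set r := 2 * exp 1 ^ 2 / lam ^ 2 with hr
  have hr0 : 0 < r := by positivity
  have hr1 : r ≤ 1 := (div_le_one hlam_sq).2 hlam
  have hbase : 2 * exp 1 ^ 2 * n / s ^ 2 ≤ r := by
    refine div_le_of_le_mul₀ (by positivity) hr0.le ?_
    calc 2 * exp 1 ^ 2 * n = r * (lam * √n) ^ 2 := by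
          rw [hr, mul_pow, sq_sqrt n.cast_nonneg]; field_simp [(pow_ne_zero_iff two_ne_zero).1 hlam_sq.ne']
      _ ≤ r * s ^ 2 := by gcongr
  calc (n.choose s : ℝ) * 2 ^ (s - 1) / s ! ≤ (2 * exp 1 ^ 2 * n / s ^ 2) ^ s :=
        choose_mul_two_pow_sub_one_div_factorial_le n s
    _ ≤ r ^ (s : ℝ) := by rw [rpow_natCast]; gcongr
    _ ≤ r ^ (lam * √n) := rpow_le_rpow_of_exponent_ge hr0 hr1 hs
    _ = exp (lam * log r * √n) := by rw [rpow_def_of_pos hr0]; ring_nf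

/-- For `λ > e·√2` and `sₙ = ⌈λ√n⌉`, the sequence `n·C(n,sₙ)·2^{sₙ−1}/sₙ!` tends to `0`
as `n → ∞` (the binomial coefficient `C(n,sₙ)`, hence the whole term, vanishes whenever
`sₙ > n`). -/
theorem n_mul_phi_tendsto_zero (lam : ℝ) (hlam : Real.exp 1 * Real.sqrt 2 < lam) :
    Tendsto (fun n : ℕ =>
        (n : ℝ) * (n.choose ⌈lam * Real.sqrt n⌉₊) *
          2 ^ (⌈lam * Real.sqrt n⌉₊ - 1) / ((⌈lam * Real.sqrt n⌉₊).factorial : ℝ))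
      atTop (nhds 0) := by
  have hlam0 : 0 < lam := (by positivity : (0 : ℝ) ≤ exp 1 * √2).trans_lt hlam
  have hsq : 2 * exp 1 ^ 2 < lam ^ 2 :=
    calc 2 * exp 1 ^ 2 = (exp 1 * √2) ^ 2 := by rw [mul_pow, sq_sqrt zero_le_two]; ring
      _ < lam ^ 2 := by gcongr
  have hlog : log (2 * exp 1 ^ 2 / lam ^ 2) < 0 :=
    log_neg (by positivity) ((div_lt_one (by positivity)).2 hsq)
  refine squeeze_zero (fun n => by positivity) (fun n => ?_)
    ((tendsto_mul_exp_mul_sqrt_atTop_nhds_zero (mul_neg_of_pos_of_neg hlam0 hlog)).comp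
      tendsto_natCast_atTop_atTop)
  rw [mul_assoc, mul_div_assoc]
  exact mul_le_mul_of_nonneg_left
    (choose_mul_two_pow_sub_one_div_factorial_le_exp hlam0.le hsq.le (Nat.le_ceil _))
    n.cast_nonneg
end
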